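/- Let n = 3 and let r_1, r_2, r_3 > 0 be pairwise distinct. At any parade with signed coordinates x_1 = ±r_1, x_2 = ±r_2, x_3 = r_3, the Hessian matrix of the perimeter L with respect to the reduced coordinates (α_1, α_2) equals the 2×2 matrix [[b_1 + b_2, −b_2], [−b_2, b_2 + b_3]], where b_i = x_{i−1} x_i / |x_{i−1} − x_i| with indices mod 3. -/

import Mathlib

open Real

/-- Length of the chordal segment between points at radii `r`, `r'` whose polar angles
differ by `θ`. -/
noncomputable def ell (r r' θ : ℝ) : ℝ :=
  Real.sqrt (r ^ 2 + r' ^ 2 - 2 * r * r' * Real.cos θ)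

/-- The perimeter of the connecting cycle for three concentric circles of radii
`r1, r2, r3`, as a function of the polar angles `a1, a2` of the first two vertices,
the third angle being fixed to `0`. -/
noncomputable def L3 (r1 r2 r3 : ℝ) (a1 a2 : ℝ) : ℝ :=
  ell r1 r2 (a2 - a1) + ell r2 r3 (0 - a2) + ell r3 r1 (a1 - 0)

/-- Partial derivative in the first variable. -/
noncomputable def pd1 (f : ℝ → ℝ → ℝ) (a b : ℝ) : ℝ := deriv (fun x => f x b) a

/-- Partial derivative in the second variable. -/
noncomputable def pd2 (f : ℝ → ℝ → ℝ) (a b : ℝ) : ℝ := deriv (fun y => f a y) b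

/-- The Hessian matrix of `L3 r1 r2 r3` at `(a, b)` in the reduced coordinates
`(α₁, α₂)`. -/
noncomputable def hess3 (r1 r2 r3 a b : ℝ) : Matrix (Fin 2) (Fin 2) ℝ :=
  !![pd1 (pd1 (L3 r1 r2 r3)) a b, pd1 (pd2 (L3 r1 r2 r3)) a b;
     pd2 (pd1 (L3 r1 r2 r3)) a b, pd2 (pd2 (L3 r1 r2 r3)) a b]

/-!
Each side of the cycle is `ell r r'` evaluated at a difference of two of the angles
`α₁, α₂, α₃ = 0`, so the Hessian of `L` is the tridiagonal matrix of the second derivatives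
`ell''` of the three sides at those differences. At a parade all these differences have
`sin θ = 0`, where `ell'' θ = r r' cos θ / ell θ`; in signed coordinates `r r' cos θ = x x'`
and `ell θ = |x - x'|`.
-/

lemma ell_radicand_pos {r r' : ℝ} (hr : 0 < r) (hr' : 0 < r') (hne : r ≠ r') (θ : ℝ) :
    0 < r ^ 2 + r' ^ 2 - 2 * r * r' * Real.cos θ := by
  have hsq : 0 < (r - r') ^ 2 := by have := sub_ne_zero.mpr hne; positivity
  nlinarith [Real.cos_le_one θ, mul_pos hr hr']

lemma contDiff_ell {r r' : ℝ} (hr : 0 < r) (hr' : 0 < r') (hne : r ≠ r') {n : WithTop ℕ∞} :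
    ContDiff ℝ n (ell r r') :=
  (contDiff_const.sub (contDiff_const.mul Real.contDiff_cos)).sqrt
    fun θ => (ell_radicand_pos hr hr' hne θ).ne'

lemma hasDerivAt_ell {r r' : ℝ} (hr : 0 < r) (hr' : 0 < r') (hne : r ≠ r') (θ : ℝ) :
    HasDerivAt (ell r r') (r * r' * Real.sin θ / ell r r' θ) θ := by
  have hq := ell_radicand_pos hr hr' hne θ
  have hinner : HasDerivAt (fun t => r ^ 2 + r' ^ 2 - 2 * r * r' * Real.cos t)
      (2 * r * r' * Real.sin θ) θ := by
    simpa using ((Real.hasDerivAt_cos θ).const_mul (2 * r * r')).const_sub (r ^ 2 + r' ^ 2)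
  refine (hinner.sqrt hq.ne').congr_deriv ?_
  rw [ell]
  field_simp

lemma deriv_deriv_ell {r r' θ : ℝ} (hr : 0 < r) (hr' : 0 < r') (hne : r ≠ r')
    (hs : Real.sin θ = 0) :
    deriv (deriv (ell r r')) θ = r * r' * Real.cos θ / ell r r' θ := by
  have hderiv : deriv (ell r r') = fun t => r * r' * Real.sin t / ell r r' t :=
    funext fun t => (hasDerivAt_ell hr hr' hne t).deriv
  have hpos : ell r r' θ ≠ 0 := (Real.sqrt_pos.mpr (ell_radicand_pos hr hr' hne θ)).ne'
  rw [hderiv]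
  refine (((Real.hasDerivAt_sin θ).const_mul (r * r')).div (hasDerivAt_ell hr hr' hne θ)
    hpos).deriv.trans ?_
  rw [hs]
  field_simp
  ring

lemma ell_sub_eq_abs {r r' a b : ℝ} (ha : Real.sin a = 0) (hb : Real.sin b = 0) :
    ell r r' (b - a) = |r * Real.cos a - r' * Real.cos b| := by
  have hca : Real.cos a ^ 2 = 1 := by nlinarith [Real.sin_sq_add_cos_sq a]
  have hcb : Real.cos b ^ 2 = 1 := by nlinarith [Real.sin_sq_add_cos_sq b]
  rw [ell, ← Real.sqrt_sq_eq_abs, Real.cos_sub, ha, hb]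
  congr 1
  linear_combination (-r ^ 2) * hca - r' ^ 2 * hcb

lemma deriv_deriv_ell_sub {r r' a b : ℝ} (hr : 0 < r) (hr' : 0 < r') (hne : r ≠ r')
    (ha : Real.sin a = 0) (hb : Real.sin b = 0) :
    deriv (deriv (ell r r')) (b - a) =
      r * Real.cos a * (r' * Real.cos b) / |r * Real.cos a - r' * Real.cos b| := by
  have hs : Real.sin (b - a) = 0 := by rw [Real.sin_sub, ha, hb]; ring
  rw [deriv_deriv_ell hr hr' hne hs, ell_sub_eq_abs ha hb, Real.cos_sub, ha, hb]
  ring_nf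

noncomputable def hessian (F : ℝ → ℝ → ℝ) (a b : ℝ) : Matrix (Fin 2) (Fin 2) ℝ :=
  !![pd1 (pd1 F) a b, pd1 (pd2 F) a b; pd2 (pd1 F) a b, pd2 (pd2 F) a b]

section

/- `fun x y => f (y - x) + g (c - y) + h (x - c)` is the shape of a cyclic perimeter whose
third vertex is pinned at angle `c`. -/
variable {f g h : ℝ → ℝ} {c : ℝ}

lemma pd1_cyclicSum (hf : Differentiable ℝ f) (hh : Differentiable ℝ h) :
    pd1 (fun x y => f (y - x) + g (c - y) + h (x - c)) =
      fun x y => deriv h (x - c) - deriv f (y - x) := by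
  ext x y
  rw [pd1, deriv_fun_add, deriv_fun_add, deriv_comp_const_sub, deriv_comp_sub_const, deriv_const]
  · ring
  all_goals fun_prop

lemma pd2_cyclicSum (hf : Differentiable ℝ f) (hg : Differentiable ℝ g) :
    pd2 (fun x y => f (y - x) + g (c - y) + h (x - c)) =
      fun x y => deriv f (y - x) - deriv g (c - y) := by
  ext x y
  rw [pd2, deriv_fun_add, deriv_fun_add, deriv_comp_const_sub, deriv_comp_sub_const, deriv_const]
  · ring
  all_goals fun_prop

lemma hessian_cyclicSum (hf : ContDiff ℝ 2 f) (hg : ContDiff ℝ 2 g) (hh : ContDiff ℝ 2 h)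
    (a b : ℝ) :
    hessian (fun x y => f (y - x) + g (c - y) + h (x - c)) a b =
      !![deriv (deriv h) (a - c) + deriv (deriv f) (b - a), -deriv (deriv f) (b - a);
        -deriv (deriv f) (b - a), deriv (deriv f) (b - a) + deriv (deriv g) (c - b)] := by
  have hf' := hf.differentiable_deriv_two
  have hg' := hg.differentiable_deriv_two
  have hh' := hh.differentiable_deriv_two
  have two_ne : (2 : WithTop ℕ∞) ≠ 0 := by norm_num
  rw [hessian, pd1_cyclicSum (hf.differentiable two_ne) (hh.differentiable two_ne),
    pd2_cyclicSum (hf.differentiable two_ne) (hg.differentiable two_ne)]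
  ext i j
  fin_cases i <;> fin_cases j <;>
    simp (disch := fun_prop) [pd1, pd2, deriv_fun_sub, deriv_comp_const_sub,
      deriv_comp_sub_const]

end

/-- at any parade (angles in `{0, π}`, third vertex fixed at `(r3, 0)`) for
three concentric circles with pairwise distinct positive radii, the Hessian of the
perimeter in the reduced coordinates `(α₁, α₂)` equals
`[[b₁ + b₂, −b₂], [−b₂, b₂ + b₃]]` with `bᵢ = x_{i−1} x_i / |x_{i−1} − x_i|`
(indices mod 3), where `xᵢ = rᵢ cos αᵢ` are the signed coordinates. -/
theorem stmt_5 (r1 r2 r3 : ℝ) (h1 : 0 < r1) (h2 : 0 < r2) (h3 : 0 < r3)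
    (h12 : r1 ≠ r2) (h23 : r2 ≠ r3) (h13 : r1 ≠ r3)
    (a1 a2 : ℝ) (hp1 : a1 = 0 ∨ a1 = π) (hp2 : a2 = 0 ∨ a2 = π) :
    hess3 r1 r2 r3 a1 a2 =
      let x1 := r1 * Real.cos a1
      let x2 := r2 * Real.cos a2
      let x3 := r3
      let b1 := x3 * x1 / |x3 - x1|
      let b2 := x1 * x2 / |x1 - x2|
      let b3 := x2 * x3 / |x2 - x3|
      !![b1 + b2, -b2; -b2, b2 + b3] := by
  have hs1 : Real.sin a1 = 0 := by rcases hp1 with rfl | rfl <;> simp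
  have hs2 : Real.sin a2 = 0 := by rcases hp2 with rfl | rfl <;> simp
  change hessian (fun x y => ell r1 r2 (y - x) + ell r2 r3 (0 - y) + ell r3 r1 (x - 0)) a1 a2 = _
  rw [hessian_cyclicSum (contDiff_ell h1 h2 h12) (contDiff_ell h2 h3 h23)
      (contDiff_ell h3 h1 h13.symm), deriv_deriv_ell_sub h3 h1 h13.symm Real.sin_zero hs1,
    deriv_deriv_ell_sub h1 h2 h12 hs1 hs2, deriv_deriv_ell_sub h2 h3 h23 hs2 Real.sin_zero]
  simp only [Real.cos_zero, mul_one]
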